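/- For every m ≥ 1 and every τ > 0, the gate contraction factor satisfies 0 < γ(τ,m) < 1, where γ(τ,m) = E[Z · 1_{Z ≤ τ}] / (m · P(Z ≤ τ)) and Z follows the Gamma distribution with shape m/2 and rate 1/2 (the chi-square distribution with m degrees of freedom, whose unconditional mean is m). -/

import Mathlib

open MeasureTheory ProbabilityTheory Matrix Filter

/-- The standard Gaussian measure on `ℝ^m`: the product of `m` copies of the
real Gaussian measure with mean `0` and variance `1`. -/
noncomputable def stdGaussian (m : ℕ) : Measure (Fin m → ℝ) :=
  Measure.pi fun _ => gaussianReal 0 1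

/-- The chi-square distribution with `m` degrees of freedom, i.e. the Gamma
distribution with shape `m/2` and rate `1/2`. -/
noncomputable def chiSqMeasure (m : ℕ) : Measure ℝ :=
  gammaMeasure ((m : ℝ) / 2) (1 / 2)

/-- The gate contraction factor `γ(τ, m) = E[Z · 1_{Z ≤ τ}] / (m · P(Z ≤ τ))`
where `Z ~ χ²_m`. -/
noncomputable def gateGamma (τ : ℝ) (m : ℕ) : ℝ :=
  (∫ z in Set.Iic τ, z ∂chiSqMeasure m) / (m * (chiSqMeasure m (Set.Iic τ)).toReal)

section GateGammaAux
open Real Set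

private lemma gg_setIntegral (a r : ℝ) (ha : 0 < a) (hr : 0 < r) (s : Set ℝ)
    (hs : MeasurableSet s) :
    ∫ z in s, z ∂(gammaMeasure a r) = ∫ z in s, gammaPDFReal a r z * z := by
  have : gammaMeasure a r
      = volume.withDensity (fun x => ((gammaPDFReal a r x).toNNReal : ENNReal)) := rfl
  rw [this, setIntegral_withDensity_eq_setIntegral_smul
      (measurable_gammaPDFReal a r).real_toNNReal _ hs]
  refine setIntegral_congr_fun hs fun x _ => ?_
  simp [NNReal.smul_def, Real.coe_toNNReal _ (gammaPDFReal_nonneg ha hr x)]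

private lemma gg_intOn_id (a r : ℝ) (ha : 0 < a) (hr : 0 < r) :
    IntegrableOn (fun x => gammaPDFReal a r x * x) (Ioi 0) := by
  have h := integrableOn_rpow_mul_exp_neg_mul_rpow (p := 1) (s := a) (b := r)
    (by linarith) one_pos hr
  have h2 : IntegrableOn (fun x : ℝ => r ^ a / Gamma a * (x ^ a * exp (-r * x ^ (1:ℝ)))) (Ioi 0) :=
    h.const_mul _
  refine h2.congr_fun (fun x hx => ?_) measurableSet_Ioi
  simp only [gammaPDFReal, if_pos (le_of_lt (show (0:ℝ) < x from hx)), rpow_one]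
  rw [show a = (a - 1) + 1 by ring, rpow_add_one (ne_of_gt hx) (a-1)]
  ring_nf

private lemma gg_intOn_w (a r : ℝ) (ha : 0 < a) (hr : 0 < r) :
    IntegrableOn (gammaPDFReal a r) (Ioi 0) := by
  have h := integrableOn_rpow_mul_exp_neg_mul_rpow (p := 1) (s := a - 1) (b := r)
    (by linarith) one_pos hr
  have h2 : IntegrableOn (fun x : ℝ => r ^ a / Gamma a * (x ^ (a-1) * exp (-r * x ^ (1:ℝ))))
      (Ioi 0) := h.const_mul _
  refine h2.congr_fun (fun x hx => ?_) measurableSet_Ioi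
  simp only [gammaPDFReal, if_pos (le_of_lt (show (0:ℝ) < x from hx)), rpow_one]
  ring_nf

private lemma gg_mean_Ioi (a r : ℝ) (ha : 0 < a) (hr : 0 < r) :
    ∫ x in Ioi (0:ℝ), gammaPDFReal a r x * x = a / r := by
  have key := Real.integral_rpow_mul_exp_neg_mul_Ioi (a := a + 1) (by linarith) hr
  have heq : ∀ x ∈ Ioi (0:ℝ), gammaPDFReal a r x * x
      = r ^ a / Gamma a * (x ^ (a + 1 - 1) * exp (-(r * x))) := by
    intro x hx
    simp only [gammaPDFReal, if_pos (le_of_lt (show (0:ℝ) < x from hx))]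
    rw [show a + 1 - 1 = (a - 1) + 1 by ring, rpow_add_one (ne_of_gt hx) (a-1)]
    ring_nf
  rw [setIntegral_congr_fun measurableSet_Ioi heq, integral_const_mul, key,
    Real.Gamma_add_one (ne_of_gt ha)]
  rw [div_rpow (by norm_num) hr.le, one_rpow]
  have hG := Real.Gamma_pos_of_pos ha
  rw [rpow_add hr, rpow_one]
  field_simp

-- full integrability
private lemma gg_int_id (a r : ℝ) (ha : 0 < a) (hr : 0 < r) :
    Integrable (fun x => gammaPDFReal a r x * x) := by
  rw [← integrableOn_univ, ← Set.Iio_union_Ici (a := (0:ℝ))]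
  refine IntegrableOn.union ?_ ?_
  · refine (integrableOn_zero (s := Iio 0)).congr_fun (fun x hx => ?_) measurableSet_Iio
    simp [gammaPDFReal, not_le.mpr (mem_Iio.mp hx)]
  · rw [integrableOn_Ici_iff_integrableOn_Ioi]
    exact gg_intOn_id a r ha hr

private lemma gg_int_w (a r : ℝ) (ha : 0 < a) (hr : 0 < r) :
    Integrable (gammaPDFReal a r) := by
  rw [← integrableOn_univ, ← Set.Iio_union_Ici (a := (0:ℝ))]
  refine IntegrableOn.union ?_ ?_
  · refine (integrableOn_zero (s := Iio 0)).congr_fun (fun x hx => ?_) measurableSet_Iio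
    simp [gammaPDFReal, not_le.mpr (mem_Iio.mp hx)]
  · rw [integrableOn_Ici_iff_integrableOn_Ioi]
    exact gg_intOn_w a r ha hr

private lemma gg_int_w_one (a r : ℝ) (ha : 0 < a) (hr : 0 < r) :
    ∫ x, gammaPDFReal a r x = 1 := by
  rw [integral_eq_lintegral_of_nonneg_ae (ae_of_all _ (gammaPDFReal_nonneg ha hr))
    (measurable_gammaPDFReal a r).aestronglyMeasurable]
  have : (fun x => ENNReal.ofReal (gammaPDFReal a r x)) = gammaPDF a r := rfl
  rw [this, lintegral_gammaPDF_eq_one ha hr]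
  simp

private lemma gg_int_id_mean (a r : ℝ) (ha : 0 < a) (hr : 0 < r) :
    ∫ x, gammaPDFReal a r x * x = a / r := by
  have h1 : ∫ x in Iio (0:ℝ), gammaPDFReal a r x * x = 0 := by
    rw [setIntegral_congr_fun measurableSet_Iio (g := fun _ => (0:ℝ))
      (fun x hx => by simp [gammaPDFReal, not_le.mpr (mem_Iio.mp hx)])]
    simp
  have h2 := gg_mean_Ioi a r ha hr
  have := setIntegral_union (Set.Iio_disjoint_Ici le_rfl) measurableSet_Ici
    ((gg_int_id a r ha hr).integrableOn (s := Iio 0))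
    ((gg_int_id a r ha hr).integrableOn (s := Ici 0))
  rw [Set.Iio_union_Ici, setIntegral_univ] at this
  rw [this, h1, integral_Ici_eq_integral_Ioi, h2, zero_add]

/-- For every `m ≥ 1` and `τ > 0`, the gate contraction factor satisfies
`0 < γ(τ, m) < 1`. -/
theorem gateGamma_pos_lt_one (m : ℕ) (hm : 1 ≤ m) (τ : ℝ) (hτ : 0 < τ) :
    0 < gateGamma τ m ∧ gateGamma τ m < 1 := by
  have hm1 : (1:ℝ) ≤ (m:ℝ) := by exact_mod_cast hm
  set a : ℝ := (m : ℝ) / 2 with ha_def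
  set r : ℝ := (1 : ℝ) / 2 with hr_def
  have ha : 0 < a := by rw [ha_def]; linarith
  have hr : 0 < r := by norm_num [hr_def]
  set w : ℝ → ℝ := gammaPDFReal a r with hw_def
  have wnn : ∀ x, 0 ≤ w x := gammaPDFReal_nonneg ha hr
  have wpos : ∀ x : ℝ, 0 < x → 0 < w x := fun x hx => gammaPDFReal_pos ha hr hx
  have hwI : Integrable w := gg_int_w a r ha hr
  have hgI : Integrable (fun x => w x * x) := gg_int_id a r ha hr
  have gnn : ∀ x, 0 ≤ w x * x := by
    intro x
    rcases le_or_gt x 0 with hx | hx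
    · rcases eq_or_lt_of_le hx with rfl | hx'
      · simp
      · simp [hw_def, gammaPDFReal, not_le.mpr hx']
    · exact mul_nonneg (wnn x) hx.le
  have hchi : chiSqMeasure m = gammaMeasure a r := rfl
  -- real quantities
  set P : ℝ := ∫ x in Iic τ, w x with hP_def
  set Q : ℝ := ∫ x in Ioi τ, w x with hQ_def
  set I : ℝ := ∫ x in Iic τ, w x * x with hI_def
  set J : ℝ := ∫ x in Ioi τ, w x * x with hJ_def
  have hPQ : P + Q = 1 := by
    rw [hP_def, hQ_def, ← gg_int_w_one a r ha hr,
      ← setIntegral_union (Set.Iic_disjoint_Ioi le_rfl) measurableSet_Ioi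
        hwI.integrableOn hwI.integrableOn, Set.Iic_union_Ioi, setIntegral_univ]
  have hIJ : I + J = a / r := by
    rw [hI_def, hJ_def, ← gg_int_id_mean a r ha hr,
      ← setIntegral_union (Set.Iic_disjoint_Ioi le_rfl) measurableSet_Ioi
        hgI.integrableOn hgI.integrableOn, Set.Iic_union_Ioi, setIntegral_univ]
  have har : a / r = (m:ℝ) := by rw [ha_def, hr_def]; field_simp
  -- positivity of P, I, Q
  have hIocP : (0:ENNReal) < volume (Ioc (0:ℝ) τ) := by
    rw [Real.volume_Ioc]
    simpa using ENNReal.ofReal_pos.mpr hτ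
  have hPpos : 0 < P := by
    rw [hP_def, setIntegral_pos_iff_support_of_nonneg_ae
      (ae_of_all _ wnn) hwI.integrableOn]
    refine lt_of_lt_of_le hIocP (measure_mono fun x hx => ?_)
    exact ⟨(wpos x hx.1).ne', hx.2⟩
  have hIpos : 0 < I := by
    rw [hI_def, setIntegral_pos_iff_support_of_nonneg_ae
      (ae_of_all _ gnn) hgI.integrableOn]
    refine lt_of_lt_of_le hIocP (measure_mono fun x hx => ?_)
    exact ⟨mul_ne_zero (wpos x hx.1).ne' hx.1.ne', hx.2⟩
  -- J > τ * Q
  have hsub : IntegrableOn (fun x => w x * (x - τ)) (Ioi τ) := by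
    have := (hgI.integrableOn (s := Ioi τ)).sub
      ((hwI.integrableOn (s := Ioi τ)).mul_const τ)
    exact this.congr (ae_of_all _ fun x => by simp [Pi.sub_apply]; ring)
  have hJQ : 0 < J - τ * Q := by
    have hpos : 0 < ∫ x in Ioi τ, w x * (x - τ) := by
      rw [setIntegral_pos_iff_support_of_nonneg_ae ?_ hsub]
      · refine lt_of_lt_of_le ?_ (measure_mono (s := Ioc τ (τ+1)) fun x hx => ?_)
        · rw [Real.volume_Ioc]; simpa using ENNReal.ofReal_pos.mpr (by linarith : (0:ℝ) < τ + 1 - τ)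
        · exact ⟨mul_ne_zero (wpos x (hτ.trans hx.1)).ne' (sub_pos.mpr hx.1).ne', hx.1⟩
      · filter_upwards [self_mem_ae_restrict measurableSet_Ioi] with x hx
        exact mul_nonneg (wnn x) (sub_nonneg.mpr (le_of_lt hx))
    have heq : ∫ x in Ioi τ, w x * (x - τ) = J - τ * Q := by
      rw [hJ_def, hQ_def]
      rw [show (fun x => w x * (x - τ)) = fun x => w x * x - w x * τ from funext fun x => by ring]
      rw [integral_sub (hgI.integrableOn) ((hwI.integrableOn).mul_const τ),
        integral_mul_const]
      ring
    linarith [heq ▸ hpos]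
  -- I ≤ τ * P
  have hIτP : I ≤ τ * P := by
    have : I ≤ ∫ x in Iic τ, w x * τ := by
      refine setIntegral_mono_on hgI.integrableOn ((hwI.integrableOn).mul_const τ)
        measurableSet_Iic fun x hx => ?_
      exact mul_le_mul_of_nonneg_left hx (wnn x)
    rw [integral_mul_const] at this
    rw [hP_def]; linarith
  have hQnn : 0 ≤ Q := setIntegral_nonneg measurableSet_Ioi fun x _ => wnn x
  -- main inequality I < m * P
  have hmain : I < (m:ℝ) * P := by
    have h1 : I * Q ≤ τ * P * Q := mul_le_mul_of_nonneg_right hIτP hQnn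
    have h2 : τ * P * Q < P * J := by
      have := mul_lt_mul_of_pos_left (show τ * Q < J by linarith) hPpos
      nlinarith
    nlinarith [hIJ, hPQ, har]
  -- conversions
  have hInum : ∫ z in Iic τ, z ∂chiSqMeasure m = I := by
    rw [hchi, gg_setIntegral a r ha hr _ measurableSet_Iic]
  have hPmeas : (chiSqMeasure m (Iic τ)).toReal = P := by
    rw [hchi]
    have : gammaMeasure a r (Iic τ) = ∫⁻ x in Iic τ, gammaPDF a r x := by
      rw [gammaMeasure, withDensity_apply _ measurableSet_Iic]
    rw [this, hP_def, integral_eq_lintegral_of_nonneg_ae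
      (ae_of_all _ wnn) (measurable_gammaPDFReal a r).aestronglyMeasurable.restrict]
    rfl
  have hden : 0 < (m:ℝ) * P := mul_pos (by linarith) hPpos
  constructor
  · rw [gateGamma, hInum, hPmeas]
    exact div_pos hIpos hden
  · rw [gateGamma, hInum, hPmeas, div_lt_one hden]
    exact hmain

end GateGammaAux
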